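/- arXiv:2402.11104 — 4 statements merged into one kernel-verified Lean document; each statement's English description precedes it below -/
import Mathlib

section
/- For 2 ≤ t ≤ m, the Borda scoring vector β = (m−1, m−2, ..., 1, 0) lies in the span of the vectors α^1, ..., α^t, where α^k_j = C(j−1, k−1)·C(m−j, t−k). -/
open Finset

private lemma vand (a b n : ℕ) :
    ∑ k ∈ range (n+1), a.choose k * b.choose (n-k) = (a+b).choose n := by
  rw [Nat.add_choose_eq, Finset.Nat.sum_antidiagonal_eq_sum_range_succ_mk]

private lemma succ_mul_choose (a k : ℕ) :
    (k+1) * a.choose (k+1) = a * (a-1).choose k := by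
  cases a with
  | zero => simp
  | succ n =>
    rw [Nat.succ_sub_one, mul_comm]
    exact (Nat.add_one_mul_choose_eq n k).symm

private lemma S2 (a b n : ℕ) :
    ∑ k ∈ range (n+2), k * (a.choose k * b.choose (n+1-k))
      = a * (a - 1 + b).choose n := by
  rw [Finset.sum_range_succ']
  simp only [Nat.zero_eq, zero_mul, add_zero]
  have : ∀ k, (k+1) * (a.choose (k+1) * b.choose (n+1-(k+1)))
      = a * ((a-1).choose k * b.choose (n-k)) := by
    intro k
    have h : n + 1 - (k+1) = n - k := by omega
    rw [h, ← mul_assoc, succ_mul_choose, mul_assoc]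
  rw [Finset.sum_congr rfl (fun k _ => this k), ← Finset.mul_sum, vand]

theorem borda_mem_span_alpha (m t : ℕ) (ht2 : 2 ≤ t) (htm : t ≤ m) :
    (fun j : Fin m => ((m - (j.val + 1) : ℕ) : ℝ)) ∈
      Submodule.span ℝ (Set.range (fun k : Fin t => fun j : Fin m =>
        ((Nat.choose j.val k.val * Nat.choose (m - (j.val + 1)) (t - (k.val + 1)) : ℕ) : ℝ))) := by
  rw [Submodule.mem_span_range_iff_exists_fun]
  set C1 : ℝ := ((m-1).choose (t-1) : ℝ) with hC1
  set C2 : ℝ := ((m-2).choose (t-2) : ℝ) with hC2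
  have hC1ne : C1 ≠ 0 := by
    rw [hC1]
    exact Nat.cast_ne_zero.mpr (Nat.choose_pos (by omega)).ne'
  have hC2ne : C2 ≠ 0 := by
    rw [hC2]
    exact Nat.cast_ne_zero.mpr (Nat.choose_pos (by omega)).ne'
  refine ⟨fun k => ((m:ℝ)-1)/C1 - (k.val : ℝ)/C2, ?_⟩
  funext j
  have hj : j.val < m := j.isLt
  -- nat sum identities
  have h1 : ∑ k ∈ range t, j.val.choose k * (m - (j.val+1)).choose (t - (k+1))
      = (m-1).choose (t-1) := by
    have hv := vand j.val (m - (j.val+1)) (t-1)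
    rw [show t - 1 + 1 = t from by omega,
        show j.val + (m - (j.val+1)) = m - 1 from by omega] at hv
    rw [← hv]
    exact Finset.sum_congr rfl fun k _ => by rw [show t - (k+1) = t - 1 - k from by omega]
  have h2 : ∑ k ∈ range t, k * (j.val.choose k * (m - (j.val+1)).choose (t - (k+1)))
      = j.val * (m-2).choose (t-2) := by
    have hs := S2 j.val (m - (j.val+1)) (t-2)
    rw [show t - 2 + 2 = t from by omega] at hs
    have hs' : ∑ k ∈ range t, k * (j.val.choose k * (m - (j.val+1)).choose (t - (k+1)))
        = j.val * (j.val - 1 + (m - (j.val+1))).choose (t-2) := by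
      rw [← hs]
      exact Finset.sum_congr rfl fun k hk => by
        rw [show t - (k+1) = t - 2 + 1 - k from by omega]
    rw [hs']
    rcases Nat.eq_zero_or_pos j.val with h0 | h0
    · simp [h0]
    · congr 2; omega
  -- real computation
  simp only [Finset.sum_apply, Pi.smul_apply, smul_eq_mul]
  have expand : ∀ k : Fin t,
      (((m:ℝ)-1)/C1 - (k.val : ℝ)/C2) *
        ((j.val.choose k.val * (m - (j.val+1)).choose (t - (k.val+1)) : ℕ) : ℝ)
      = ((m:ℝ)-1)/C1 * ((j.val.choose k.val * (m - (j.val+1)).choose (t - (k.val+1)) : ℕ) : ℝ)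
        - (1/C2) * ((k.val * (j.val.choose k.val * (m - (j.val+1)).choose (t - (k.val+1))) : ℕ) : ℝ) := by
    intro k
    push_cast
    ring
  rw [Finset.sum_congr rfl fun k _ => expand k, Finset.sum_sub_distrib,
      ← Finset.mul_sum, ← Finset.mul_sum]
  have e1 : ∑ k : Fin t, ((j.val.choose k.val * (m - (j.val+1)).choose (t - (k.val+1)) : ℕ) : ℝ) = C1 := by
    rw [hC1, ← h1, Nat.cast_sum,
      ← Fin.sum_univ_eq_sum_range (fun k => ((j.val.choose k * (m - (j.val+1)).choose (t - (k+1)) : ℕ) : ℝ)) t]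
  have e2 : ∑ k : Fin t, ((k.val * (j.val.choose k.val * (m - (j.val+1)).choose (t - (k.val+1))) : ℕ) : ℝ)
      = (j.val : ℝ) * C2 := by
    rw [hC2, ← Nat.cast_mul, ← h2, Nat.cast_sum,
      ← Fin.sum_univ_eq_sum_range (fun k => ((k * (j.val.choose k * (m - (j.val+1)).choose (t - (k+1))) : ℕ) : ℝ)) t]
  rw [e1, e2]
  rw [div_mul_cancel₀ _ hC1ne, one_div, inv_mul_eq_div, mul_div_assoc,
      div_self hC2ne, mul_one]
  rw [show ((m - (j.val+1) : ℕ) : ℝ) = (m:ℝ) - 1 - (j.val : ℝ) from by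
    have : (j.val : ℝ) + 1 ≤ m := by exact_mod_cast hj
    push_cast [Nat.cast_sub (by omega : j.val + 1 ≤ m)]
    ring]
end

section
/- For 1 ≤ t < m, the plurality scoring vector (1, 0, ..., 0) ∈ ℝ^m is not in the span of the vectors α^1, ..., α^t defined by α^k_j = C(j−1,k−1)·C(m−j,t−k), even after adding any constant vector; i.e., (1,0,...,0) ∉ span(α^1,...,α^t). -/
/-!
Each `α^k`, viewed as a function of `j`, is a polynomial of degree `< t` evaluated at the
points `j = 0, …, m - 1`, since `C(j, a)` and `C(m - 1 - j, s)` are polynomials in `j` of degrees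
`a` and `s`. So is every vector of their span. But a polynomial of degree `< t ≤ m - 1` that
vanishes at the `m - 1` points `1, …, m - 1` is zero, so it cannot take the value `1` at `0`.
-/

open Polynomial

variable {K ι : Type*} [Field K]

noncomputable def evalDegreeLT (v : ι → K) (n : ℕ) : Submodule K (ι → K) :=
  (degreeLT K n).map (LinearMap.pi fun i => leval (v i))

theorem mem_evalDegreeLT {v : ι → K} {n : ℕ} {f : ι → K} :
    f ∈ evalDegreeLT v n ↔ ∃ p : K[X], p.degree < n ∧ ∀ i, p.eval (v i) = f i := by
  simp only [evalDegreeLT, Submodule.mem_map, mem_degreeLT, funext_iff, LinearMap.pi_apply,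
    leval_apply]

theorem single_notMem_evalDegreeLT [Fintype ι] [DecidableEq ι] {v : ι → K}
    (hv : Function.Injective v) {n : ℕ} (hn : n < Fintype.card ι) (i₀ : ι) :
    Pi.single i₀ 1 ∉ evalDegreeLT v n := by
  intro hmem
  obtain ⟨p, hdeg, hp⟩ := mem_evalDegreeLT.1 hmem
  have hzero : p = 0 := by
    refine eq_zero_of_degree_lt_of_eval_index_eq_zero (Finset.univ.erase i₀) hv.injOn ?_ ?_
    · rw [Finset.card_erase_of_mem (Finset.mem_univ _), Finset.card_univ]
      exact hdeg.trans_le (by exact_mod_cast Nat.le_sub_one_of_lt hn)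
    · intro i hi
      rw [hp, Pi.single_eq_of_ne (Finset.ne_of_mem_erase hi)]
  simpa [hzero] using hp i₀

theorem eval_descPochhammer_comp_reflect {R : Type*} [CommRing R] {m j : ℕ} (hj : j < m)
    (s : ℕ) :
    ((descPochhammer R s).comp (C ((m : R) - 1) - X)).eval (j : R) =
      ((m - (j + 1)).descFactorial s : R) := by
  have hsub : (m : R) - 1 - j = ((m - (j + 1) : ℕ) : R) := by
    rw [Nat.cast_sub hj]
    push_cast
    ring
  rw [eval_comp, eval_sub, eval_C, eval_X, hsub, descPochhammer_eval_eq_descFactorial]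

theorem choose_mul_choose_reflect_mem_evalDegreeLT [CharZero K] (m a s : ℕ) :
    (fun j : Fin m => ((j.val.choose a * (m - (j.val + 1)).choose s : ℕ) : K)) ∈
      evalDegreeLT (fun j : Fin m => (j.val : K)) (a + s + 1) := by
  set q : K[X] := descPochhammer K a * (descPochhammer K s).comp (C ((m : K) - 1) - X)
  refine mem_evalDegreeLT.2 ⟨C ((a.factorial * s.factorial : K)⁻¹) * q, ?_, fun j => ?_⟩
  · have hq : q.natDegree ≤ a + s := by
      refine natDegree_mul_le.trans (add_le_add (descPochhammer_natDegree K a).le ?_)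
      refine natDegree_comp_le.trans ?_
      rw [descPochhammer_natDegree]
      exact mul_le_of_le_one_right' ((natDegree_sub_le _ _).trans
        (max_le ((natDegree_C _).trans_le zero_le_one) natDegree_X_le))
    refine degree_le_natDegree.trans_lt ?_
    exact_mod_cast (natDegree_C_mul_le _ _).trans_lt (Nat.lt_succ_of_le hq)
  · have ha : (a.factorial : K) ≠ 0 := Nat.cast_ne_zero.2 a.factorial_ne_zero
    have hs : (s.factorial : K) ≠ 0 := Nat.cast_ne_zero.2 s.factorial_ne_zero
    rw [eval_mul, eval_C, eval_mul, eval_descPochhammer_comp_reflect j.isLt,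
      descPochhammer_eval_eq_descFactorial, Nat.descFactorial_eq_factorial_mul_choose,
      Nat.descFactorial_eq_factorial_mul_choose]
    push_cast
    field_simp

theorem plurality_not_mem_span_alpha_general (m t : ℕ) (htm : t < m) :
    (fun j : Fin m => if j.val = 0 then (1 : ℝ) else 0) ∉
      Submodule.span ℝ (Set.range (fun k : Fin t => fun j : Fin m =>
        ((Nat.choose j.val k.val * Nat.choose (m - (j.val + 1)) (t - (k.val + 1)) : ℕ) : ℝ))) := by
  have hplurality : (fun j : Fin m => if j.val = 0 then (1 : ℝ) else 0) =
      Pi.single ⟨0, by omega⟩ 1 := by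
    funext j
    simp [Pi.single_apply, Fin.ext_iff]
  rw [hplurality]
  refine fun h => single_notMem_evalDegreeLT (Nat.cast_injective.comp Fin.val_injective)
    (by simpa using htm) _ (Submodule.span_le.2 ?_ h)
  rintro _ ⟨k, rfl⟩
  have hk := choose_mul_choose_reflect_mem_evalDegreeLT (K := ℝ) m k (t - (k + 1))
  rwa [show k.val + (t - (k.val + 1)) + 1 = t by omega] at hk

theorem plurality_not_mem_span_alpha (m t : ℕ) (ht1 : 1 ≤ t) (htm : t < m) :
    (fun j : Fin m => if j.val = 0 then (1 : ℝ) else 0) ∉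
      Submodule.span ℝ (Set.range (fun k : Fin t => fun j : Fin m =>
        ((Nat.choose j.val k.val * Nat.choose (m - (j.val + 1)) (t - (k.val + 1)) : ℕ) : ℝ))) :=
  plurality_not_mem_span_alpha_general m t htm
end

section
/- Let m ≥ 2 and let C be a set of m candidates with two distinguished elements a, b. There exists a probability distribution σ over linear orders (rankings) of C such that: (i) the probability that a is ranked first differs from the probability that b is ranked first; and (ii) for every subset Q ⊆ C with |Q| = m−1, the distribution of the restriction of a random ranking to Q is the same under σ and under σ with a and b swapped (i.e., σ composed with the transposition of a and b). -/
/-- The induced (partial encoding of the) order on the subset `Q` of candidates: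
`x` is preferred to `y` within `Q` under ranking `σ` (where `σ j` is the candidate
in position `j` and `σ.symm c` is the position of candidate `c`). -/
def restrictRel {m : ℕ} (Q : Finset (Fin m)) (σ : Equiv.Perm (Fin m)) :
    Fin m → Fin m → Prop :=
  fun x y => x ∈ Q ∧ y ∈ Q ∧ σ.symm x < σ.symm y

open Finset Equiv

namespace IndistAux

variable {n : ℕ}

/-- alternating binomial weights -/
def gg (n p : ℕ) : ℤ := (-1)^p * n.choose p

/-- the permutation whose inverse sends `d ↦ i` and `d.succAbove c ↦ i.succAbove (π c)` -/
def ins (d i : Fin (n+1)) (π : Perm (Fin n)) : Perm (Fin (n+1)) :=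
  ((finSuccEquiv' d).trans ((Equiv.optionCongr π).trans (finSuccEquiv' i).symm)).symm

@[simp] lemma ins_symm_self (d i : Fin (n+1)) (π : Perm (Fin n)) :
    (ins d i π).symm d = i := by
  simp [ins, finSuccEquiv'_at, finSuccEquiv'_symm_none]

@[simp] lemma ins_symm_succAbove (d i : Fin (n+1)) (π : Perm (Fin n)) (c : Fin n) :
    (ins d i π).symm (d.succAbove c) = i.succAbove (π c) := by
  simp [ins, finSuccEquiv'_succAbove, finSuccEquiv'_symm_some]

lemma ins_bijective (d : Fin (n+1)) :
    Function.Bijective (fun p : Fin (n+1) × Perm (Fin n) => ins d p.1 p.2) := by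
  rw [Fintype.bijective_iff_injective_and_card]
  constructor
  · rintro ⟨i, π⟩ ⟨i', π'⟩ h
    simp only at h
    have hi : i = i' := by
      have := congrArg (fun σ => Equiv.symm σ d) h
      simpa using this
    subst hi
    have hπ : π = π' := by
      ext c
      have := congrArg (fun σ => Equiv.symm σ (d.succAbove c)) h
      simp only [ins_symm_succAbove] at this
      exact congrArg _ (Fin.succAbove_right_injective this)
    simp [hπ]
  · simp [Fintype.card_perm, Nat.factorial_succ]

lemma sum_ins {M : Type*} [AddCommMonoid M] (d : Fin (n+1)) (G : Perm (Fin (n+1)) → M) :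
    ∑ σ, G σ = ∑ i : Fin (n+1), ∑ π : Perm (Fin n), G (ins d i π) := by
  calc ∑ σ, G σ = ∑ p : Fin (n+1) × Perm (Fin n), G (ins d p.1 p.2) :=
        (Fintype.sum_bijective _ (ins_bijective d) _ _ (fun p => rfl)).symm
    _ = _ := Fintype.sum_prod_type (fun p => G (ins d p.1 p.2))

lemma hg0 (hn : n ≠ 0) : ∑ i : Fin (n+1), gg n i.val = 0 := by
  rw [Fin.sum_univ_eq_sum_range (fun p => gg n p)]
  unfold gg
  rw [Int.alternating_sum_range_choose]
  simp [hn]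

lemma hsucc (p : Fin n) : ∑ i : Fin (n+1), gg n (i.succAbove p).val = 0 := by
  have hval : ∀ i : Fin (n+1), (i.succAbove p).val = if p.val < i.val then p.val else p.val + 1 := by
    intro i
    rw [Fin.succAbove]
    rcases lt_or_ge p.castSucc i with h | h
    · rw [if_pos h, if_pos (by simpa [Fin.lt_def] using h), Fin.coe_castSucc]
    · rw [if_neg (not_lt.2 h), if_neg (by simpa [Fin.le_def, not_lt] using h), Fin.val_succ]
  simp only [hval, apply_ite (gg n)]
  rw [Fin.sum_univ_eq_sum_range (fun i => if p.val < i then gg n p.val else gg n (p.val + 1))]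
  rw [Finset.sum_ite]
  have h1 : (range (n+1)).filter (fun i => p.val < i) = Ico (p.val+1) (n+1) := by
    ext x; simp [Finset.mem_Ico, Finset.mem_filter]; omega
  have h2 : (range (n+1)).filter (fun i => ¬ p.val < i) = range (p.val+1) := by
    ext x; simp; omega
  rw [h1, h2, Finset.sum_const, Finset.sum_const, Nat.card_Ico, Finset.card_range]
  have hp : p.val < n := p.isLt
  have key : (n.choose (p.val+1) : ℤ) * (p.val+1) = n.choose p.val * ((n:ℤ) - p.val) := by
    have h := Nat.choose_succ_right_eq n p.val
    zify [hp.le] at h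
    linarith
  unfold gg
  have hsub : ((n + 1 - (p.val + 1) : ℕ) : ℤ) = (n : ℤ) - p.val := by omega
  rw [nsmul_eq_mul, nsmul_eq_mul, hsub]
  have hpow : ((-1 : ℤ))^(p.val+1) = -(-1)^p.val := by ring
  rw [hpow]
  push_cast
  linear_combination (-(-1:ℤ)^p.val) * key

lemma gg_abs (n p : ℕ) : |gg n p| ≤ 2^n := by
  unfold gg
  rw [abs_mul, abs_pow, abs_neg, abs_one, one_pow, one_mul]
  rw [Int.abs_natCast]
  have : n.choose p ≤ 2^n := by
    rcases le_or_gt p n with h | h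
    · calc n.choose p ≤ ∑ j ∈ range (n+1), n.choose j :=
            Finset.single_le_sum (fun j _ => Nat.zero_le _) (by simp [Nat.lt_succ_iff, h])
        _ = 2^n := Nat.sum_range_choose n
    · simp [Nat.choose_eq_zero_of_lt h]
  exact_mod_cast this

lemma sum_g (hn : n ≠ 0) (d c : Fin (n+1)) (π : Perm (Fin n)) :
    ∑ i : Fin (n+1), gg n ((ins d i π).symm c).val = 0 := by
  rcases eq_or_ne c d with rfl | hc
  · simp only [ins_symm_self]; exact hg0 hn
  · obtain ⟨c₀, rfl⟩ := Fin.exists_succAbove_eq hc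
    simp only [ins_symm_succAbove]
    exact hsucc (π c₀)

/-- the weight function -/
def Fw (a b : Fin (n+1)) (σ : Perm (Fin (n+1))) : ℤ :=
  2^(n+1) + gg n (σ.symm a).val - gg n (σ.symm b).val

lemma Fw_nonneg (a b : Fin (n+1)) (σ : Perm (Fin (n+1))) : 0 ≤ Fw a b σ := by
  have h1 := abs_le.mp (gg_abs n (σ.symm a).val)
  have h2 := abs_le.mp (gg_abs n (σ.symm b).val)
  have : (2:ℤ)^(n+1) = 2^n + 2^n := by ring
  unfold Fw; linarith [h1.1, h2.2]

lemma Fw_swap (a b : Fin (n+1)) (σ : Perm (Fin (n+1))) :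
    Fw a b σ = 2 * 2^(n+1) - Fw b a σ := by
  unfold Fw; ring

lemma col_sum (hn : n ≠ 0) (a b d : Fin (n+1)) (π : Perm (Fin n)) :
    ∑ i : Fin (n+1), Fw a b (ins d i π) = (n+1) * 2^(n+1) := by
  unfold Fw
  rw [Finset.sum_sub_distrib, Finset.sum_add_distrib, sum_g hn d a π, sum_g hn d b π,
    Finset.sum_const, Finset.card_univ, Fintype.card_fin]
  ring

lemma total_sum (hn : n ≠ 0) (a b : Fin (n+1)) :
    ∑ σ : Perm (Fin (n+1)), Fw a b σ = ((n+1) * 2^(n+1)) * (n.factorial) := by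
  rw [sum_ins a (Fw a b), Finset.sum_comm]
  have : ∀ π : Perm (Fin n), ∑ i : Fin (n+1), Fw a b (ins a i π) = (n+1) * 2^(n+1) :=
    fun π => col_sum hn a b a π
  rw [Finset.sum_congr rfl (fun π _ => this π), Finset.sum_const, Finset.card_univ,
    Fintype.card_perm, Fintype.card_fin]
  ring

/-- counting constant: sum over permutations with σ.symm c = 0 of a constant -/
lemma count_sum (c : Fin (n+1)) (M : ℤ) :
    ∑ σ : Perm (Fin (n+1)), (if σ.symm c = 0 then M else 0) = n.factorial * M := by
  rw [sum_ins c (fun σ => if σ.symm c = 0 then M else 0)]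
  simp only [ins_symm_self]
  rw [Finset.sum_comm]
  simp [Finset.sum_ite_eq', Finset.card_univ, Fintype.card_perm, Fintype.card_fin, mul_comm]


lemma sum_apply_perm (c : Fin (n+1)) (G : Fin (n+1) → ℤ) :
    ∑ π : Perm (Fin (n+1)), G (π c) = n.factorial * ∑ q, G q := by
  have h1 : ∑ π : Perm (Fin (n+1)), G (π c) = ∑ π : Perm (Fin (n+1)), G (π.symm c) :=
    Fintype.sum_bijective _
      ((show Function.Involutive (Equiv.symm : Perm (Fin (n+1)) → Perm (Fin (n+1))) from
        fun π => Equiv.symm_symm π).bijective) _ _ (fun π => by simp)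
  rw [h1, sum_ins c (fun τ => G (τ.symm c))]
  simp only [ins_symm_self]
  rw [Finset.mul_sum]
  refine Finset.sum_congr rfl (fun p _ => ?_)
  rw [Finset.sum_const, Finset.card_univ, Fintype.card_perm, Fintype.card_fin, nsmul_eq_mul]

lemma sum_g_shift {k : ℕ} : ∑ q : Fin (k+1), gg (k+1) (q.val+1) = -1 := by
  have h := hg0 (n := k+1) (by omega)
  rw [Fin.sum_univ_succ] at h
  simp only [Fin.val_succ, Fin.val_zero] at h
  have h0 : gg (k+1) 0 = 1 := by simp [gg]
  linarith

lemma sumA {k : ℕ} (a b : Fin (k+2)) (hab : a ≠ b) :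
    ∑ σ : Perm (Fin (k+2)), (if σ.symm a = 0 then Fw a b σ else 0)
      = (k+1).factorial * (2^(k+2) + 1) + k.factorial := by
  rw [sum_ins a (fun σ => if σ.symm a = 0 then Fw a b σ else 0)]
  simp only [ins_symm_self]
  have hsw : ∀ i : Fin (k+2), ∑ π : Perm (Fin (k+1)), (if i = 0 then Fw a b (ins a i π) else 0)
      = if i = 0 then ∑ π : Perm (Fin (k+1)), Fw a b (ins a i π) else 0 := by
    intro i; split_ifs <;> simp
  rw [Finset.sum_congr rfl (fun i _ => hsw i), Finset.sum_ite_eq' Finset.univ 0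
    (fun i => ∑ π : Perm (Fin (k+1)), Fw a b (ins a i π)), if_pos (Finset.mem_univ _)]
  obtain ⟨b₀, hb₀⟩ := Fin.exists_succAbove_eq hab.symm
  have hFw : ∀ π : Perm (Fin (k+1)),
      Fw a b (ins a 0 π) = 2^(k+2) + 1 - gg (k+1) ((π b₀).val + 1) := by
    intro π
    unfold Fw
    rw [← hb₀, ins_symm_self, ins_symm_succAbove, Fin.succAbove_zero]
    simp [gg]
  rw [Finset.sum_congr rfl (fun π _ => hFw π), Finset.sum_sub_distrib, Finset.sum_const,
    Finset.card_univ, Fintype.card_perm, Fintype.card_fin]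
  rw [sum_apply_perm b₀ (fun q => gg (k+1) (q.val+1)), sum_g_shift]
  ring


/-- canonical relation on `Q = {d}ᶜ` induced by a reduced order `π` -/
def Trel (d : Fin (n+1)) (Q : Finset (Fin (n+1))) (π : Perm (Fin n)) :
    Fin (n+1) → Fin (n+1) → Prop :=
  fun x y => x ∈ Q ∧ y ∈ Q ∧ ∃ x₀ y₀, d.succAbove x₀ = x ∧ d.succAbove y₀ = y ∧ π x₀ < π y₀

lemma rr_eq {Q : Finset (Fin (n+1))} {d : Fin (n+1)} (hQ : ∀ x, x ∈ Q ↔ x ≠ d)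
    (i : Fin (n+1)) (π : Perm (Fin n)) :
    restrictRel Q (ins d i π) = Trel d Q π := by
  funext x y
  apply propext
  constructor
  · rintro ⟨hx, hy, hlt⟩
    obtain ⟨x₀, rfl⟩ := Fin.exists_succAbove_eq ((hQ x).1 hx)
    obtain ⟨y₀, rfl⟩ := Fin.exists_succAbove_eq ((hQ y).1 hy)
    rw [ins_symm_succAbove, ins_symm_succAbove, Fin.succAbove_lt_succAbove_iff] at hlt
    exact ⟨hx, hy, x₀, y₀, rfl, rfl, hlt⟩
  · rintro ⟨hx, hy, x₀, y₀, rfl, rfl, h⟩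
    exact ⟨hx, hy, by
      rw [ins_symm_succAbove, ins_symm_succAbove, Fin.succAbove_lt_succAbove_iff]; exact h⟩

/-- the relabeling of reduced indices induced by a transposition `sw` (with `sw d ≠ d` allowed) -/
def cmap (sw : Perm (Fin (n+1))) (d : Fin (n+1)) : Fin n ≃ Fin n :=
  Equiv.removeNone ((finSuccEquiv' d).symm.trans (sw.trans (finSuccEquiv' (sw d))))

lemma cmap_spec (sw : Perm (Fin (n+1))) (d : Fin (n+1)) (x₀ : Fin n) :
    (sw d).succAbove (cmap sw d x₀) = sw (d.succAbove x₀) := by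
  have hne : sw (d.succAbove x₀) ≠ sw d := fun h => Fin.succAbove_ne d x₀ (sw.injective h)
  obtain ⟨x₁, hx₁⟩ := Fin.exists_succAbove_eq hne
  have hE : ((finSuccEquiv' d).symm.trans (sw.trans (finSuccEquiv' (sw d)))) (some x₀) = some x₁ := by
    simp only [Equiv.trans_apply, finSuccEquiv'_symm_some]
    rw [← hx₁, finSuccEquiv'_succAbove]
  have := Equiv.removeNone_some _ ⟨x₁, hE⟩
  rw [hE] at this
  have hcx : cmap sw d x₀ = x₁ := by
    have := Option.some_injective _ this
    exact this
  rw [hcx, hx₁]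

lemma rr_sw_eq {Q : Finset (Fin (n+1))} {d : Fin (n+1)} (hQ : ∀ x, x ∈ Q ↔ x ≠ d)
    (sw : Perm (Fin (n+1))) (hsw : sw.symm = sw) (i : Fin (n+1)) (π : Perm (Fin n)) :
    restrictRel Q ((ins (sw d) i π).trans sw) = Trel d Q ((cmap sw d).trans π) := by
  have hsymm : ∀ x₀ : Fin n, ((ins (sw d) i π).trans sw).symm (d.succAbove x₀)
      = i.succAbove (π (cmap sw d x₀)) := by
    intro x₀
    rw [Equiv.symm_trans_apply, hsw, ← cmap_spec sw d x₀, ins_symm_succAbove]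
  funext x y
  apply propext
  constructor
  · rintro ⟨hx, hy, hlt⟩
    obtain ⟨x₀, rfl⟩ := Fin.exists_succAbove_eq ((hQ x).1 hx)
    obtain ⟨y₀, rfl⟩ := Fin.exists_succAbove_eq ((hQ y).1 hy)
    rw [hsymm, hsymm, Fin.succAbove_lt_succAbove_iff] at hlt
    exact ⟨hx, hy, x₀, y₀, rfl, rfl, hlt⟩
  · rintro ⟨hx, hy, x₀, y₀, rfl, rfl, h⟩
    refine ⟨hx, hy, ?_⟩
    rw [hsymm, hsymm, Fin.succAbove_lt_succAbove_iff]
    exact h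


lemma ite_irrel {p : Prop} {h1 h2 : Decidable p} (x : ENNReal) :
    @ite _ p h1 x 0 = @ite _ p h2 x 0 := by
  rcases h1 with h | h <;> rcases h2 with h' | h' <;> simp_all

end IndistAux


open IndistAux in
open scoped Classical in
set_option maxHeartbeats 2000000 in
theorem exists_indistinguishable_profile (m : ℕ) (hm : 2 ≤ m)
    (a b : Fin m) (hab : a ≠ b) :
    ∃ μ : PMF (Equiv.Perm (Fin m)),
      (∑ σ : Equiv.Perm (Fin m), if σ ⟨0, by omega⟩ = a then (μ σ).toReal else 0) ≠
        (∑ σ : Equiv.Perm (Fin m), if σ ⟨0, by omega⟩ = b then (μ σ).toReal else 0) ∧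
      ∀ Q : Finset (Fin m), Q.card = m - 1 →
        PMF.map (restrictRel Q) μ =
          PMF.map (restrictRel Q)
            (PMF.map (fun σ => σ.trans (Equiv.swap a b)) μ) := by
  obtain ⟨k, rfl⟩ : ∃ k, m = k + 2 := ⟨m - 2, by omega⟩
  set T : ℝ := ((k+2) * 2^(k+2) * (k+1).factorial : ℝ) with hT_def
  have hT : (0:ℝ) < T := by positivity
  have hFnn : ∀ σ : Perm (Fin (k+2)), (0:ℝ) ≤ (Fw a b σ : ℝ)/T :=
    fun σ => div_nonneg (by exact_mod_cast Fw_nonneg a b σ) hT.le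
  have hsum1 : ∑ σ : Perm (Fin (k+2)), ENNReal.ofReal ((Fw a b σ : ℝ)/T) = 1 := by
    rw [← ENNReal.ofReal_sum_of_nonneg (fun σ _ => hFnn σ), ← Finset.sum_div,
      ← Int.cast_sum, total_sum (n := k+1) (by omega) a b]
    rw [← ENNReal.ofReal_one]
    congr 1
    rw [div_eq_one_iff_eq hT.ne', hT_def]
    push_cast
    ring
  set μ : PMF (Perm (Fin (k+2))) :=
    PMF.ofFintype (fun σ => ENNReal.ofReal ((Fw a b σ : ℝ)/T)) hsum1 with hμ_def
  have hμ : ∀ σ, μ σ = ENNReal.ofReal ((Fw a b σ : ℝ)/T) := fun σ => rfl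
  have hμR : ∀ σ, (μ σ).toReal = (Fw a b σ : ℝ)/T := fun σ => by
    rw [hμ, ENNReal.toReal_ofReal (hFnn σ)]
  refine ⟨μ, ?_, ?_⟩
  · -- part (i)
    have key : ∀ (c : Fin (k+2)) (h0 : 0 < k+2),
        (∑ σ : Perm (Fin (k+2)), if σ ⟨0,h0⟩ = c then (μ σ).toReal else 0)
          = ((∑ σ : Perm (Fin (k+2)), if σ.symm c = 0 then Fw a b σ else 0 : ℤ) : ℝ)/T := by
      intro c h0
      rw [Int.cast_sum, Finset.sum_div]
      refine Finset.sum_congr rfl (fun σ _ => ?_)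
      have hiff : (σ ⟨0,h0⟩ = c) ↔ (σ.symm c = 0) := by
        rw [Equiv.symm_apply_eq]
        have hz : (⟨0, h0⟩ : Fin (k+2)) = 0 := rfl
        rw [hz, eq_comm]
      rw [if_congr hiff rfl rfl, hμR]
      split_ifs
      · rfl
      · simp
    rw [key a (by omega), key b (by omega)]
    have hA := sumA a b hab
    have hB : ∑ σ : Perm (Fin (k+2)), (if σ.symm b = 0 then Fw a b σ else 0)
        = (k+1).factorial * (2*2^(k+2)) - ((k+1).factorial * (2^(k+2) + 1) + k.factorial) := by
      have hstep : ∀ σ : Perm (Fin (k+2)), (if σ.symm b = 0 then Fw a b σ else 0)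
          = (if σ.symm b = 0 then (2*2^(k+2) : ℤ) else 0) - (if σ.symm b = 0 then Fw b a σ else 0) := by
        intro σ
        rw [Fw_swap a b σ]
        split_ifs <;> ring
      rw [Finset.sum_congr rfl (fun σ _ => hstep σ), Finset.sum_sub_distrib,
        count_sum b (2*2^(k+2)), sumA b a hab.symm]
    intro hcontra
    rw [div_eq_div_iff hT.ne' hT.ne'] at hcontra
    have hAB : (∑ σ : Perm (Fin (k+2)), if σ.symm a = 0 then Fw a b σ else 0)
        = (∑ σ : Perm (Fin (k+2)), if σ.symm b = 0 then Fw a b σ else 0) := by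
      have := mul_right_cancel₀ hT.ne' hcontra
      exact_mod_cast this
    rw [hA, hB] at hAB
    have h1 : (0:ℤ) < k.factorial := by exact_mod_cast k.factorial_pos
    have h2 : (0:ℤ) < (k+1).factorial := by exact_mod_cast (k+1).factorial_pos
    linarith
  · -- part (ii)
    intro Q hQcard
    rw [PMF.map_comp]
    refine PMF.ext fun R => ?_
    rw [PMF.map_apply, PMF.map_apply, tsum_fintype, tsum_fintype]
    -- find the missing candidate
    have hcard : Qᶜ.card = 1 := by
      rw [Finset.card_compl, hQcard]
      simp
    obtain ⟨d, hd⟩ := Finset.card_eq_one.mp hcard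
    have hQ : ∀ x, x ∈ Q ↔ x ≠ d := by
      intro x
      have h1 : x ∈ Qᶜ ↔ x = d := by rw [hd, Finset.mem_singleton]
      rw [Finset.mem_compl] at h1
      by_cases hx : x ∈ Q
      · simp only [hx, true_iff]
        intro hxd
        exact (h1.2 hxd) hx
      · simp only [hx, false_iff, not_not]
        exact h1.1 hx
    set sw : Perm (Fin (k+2)) := Equiv.swap a b with hsw_def
    have hswsymm : sw.symm = sw := Equiv.symm_swap a b
    set c₀ : ENNReal := ENNReal.ofReal ((((k+2) * 2^(k+2) : ℤ) : ℝ)/T) with hc₀_def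
    have colENN : ∀ (d' : Fin (k+2)) (π : Perm (Fin (k+1))), ∑ i, μ (ins d' i π) = c₀ := by
      intro d' π
      simp only [hμ]
      rw [← ENNReal.ofReal_sum_of_nonneg (fun i _ => hFnn _), ← Finset.sum_div,
        ← Int.cast_sum, col_sum (n := k+1) (by omega) a b d' π, hc₀_def]
      congr 1
    simp only [Function.comp_apply]
    trans (∑ σ : Perm (Fin (k+2)), (if R = restrictRel Q σ then μ σ else 0))
    · exact Finset.sum_congr rfl fun σ _ => ite_irrel (μ σ)
    trans (∑ σ : Perm (Fin (k+2)), (if R = restrictRel Q (σ.trans sw) then μ σ else 0))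
    swap
    · exact Finset.sum_congr rfl fun σ _ => ite_irrel (μ σ)
    calc ∑ σ : Perm (Fin (k+2)), (if R = restrictRel Q σ then μ σ else 0)
        = ∑ i : Fin (k+2), ∑ π : Perm (Fin (k+1)),
            (if R = restrictRel Q (ins d i π) then μ (ins d i π) else 0) :=
          sum_ins d (fun σ => if R = restrictRel Q σ then μ σ else 0)
      _ = ∑ π : Perm (Fin (k+1)), ∑ i : Fin (k+2),
            (if R = Trel d Q π then μ (ins d i π) else 0) := by
          rw [Finset.sum_comm]
          exact Finset.sum_congr rfl fun π _ => Finset.sum_congr rfl fun i _ => by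
            rw [rr_eq hQ i π]
      _ = ∑ π : Perm (Fin (k+1)), (if R = Trel d Q π then c₀ else 0) := by
          refine Finset.sum_congr rfl fun π _ => ?_
          split_ifs with h
          · exact colENN d π
          · simp
      _ = ∑ π : Perm (Fin (k+1)), (if R = Trel d Q ((cmap sw d).trans π) then c₀ else 0) := by
          refine (Fintype.sum_equiv (Equiv.mulRight (cmap sw d))
            (fun π => if R = Trel d Q ((cmap sw d).trans π) then c₀ else 0)
            (fun ρ => if R = Trel d Q ρ then c₀ else 0) (fun π => ?_)).symm
          rfl
      _ = ∑ π : Perm (Fin (k+1)), ∑ i : Fin (k+2),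
            (if R = Trel d Q ((cmap sw d).trans π) then μ (ins (sw d) i π) else 0) := by
          refine Finset.sum_congr rfl fun π _ => ?_
          split_ifs with h
          · exact (colENN (sw d) π).symm
          · simp
      _ = ∑ i : Fin (k+2), ∑ π : Perm (Fin (k+1)),
            (if R = restrictRel Q ((ins (sw d) i π).trans sw) then μ (ins (sw d) i π) else 0) := by
          rw [Finset.sum_comm]
          exact Finset.sum_congr rfl fun i _ => Finset.sum_congr rfl fun π _ => by
            rw [rr_sw_eq hQ sw hswsymm i π]
      _ = ∑ σ : Perm (Fin (k+2)),
            (if R = restrictRel Q (σ.trans sw) then μ σ else 0) :=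
          (sum_ins (sw d) (fun σ => if R = restrictRel Q (σ.trans sw) then μ σ else 0)).symm
end

section
/- Given real numbers p₁, p₂, p₃ ∈ [1/3, 2/3], the assignment of probabilities: (p₂ − 1/3) to ranking a≻b≻c, (2/3 − p₂) to a≻c≻b, (p₃ − 1/3) to b≻c≻a, (2/3 − p₃) to b≻a≻c, (p₁ − 1/3) to c≻a≻b, (2/3 − p₁) to c≻b≻a, defines a probability distribution over the six rankings of {a,b,c} under which P[a ≻ b] = p₁, P[b ≻ c] = p₂, and P[c ≻ a] = p₃. -/
/-- Candidates are `0 = a`, `1 = b`, `2 = c`. A ranking `σ : Equiv.Perm (Fin 3)`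
places candidate `σ j` in position `j` (position `0` is the top).
The intended weight of each of the six rankings. -/
noncomputable def rankingWeight (p₁ p₂ p₃ : ℝ) (σ : Equiv.Perm (Fin 3)) : ℝ :=
  if σ = Equiv.refl (Fin 3) then p₂ - 1/3                                      -- a ≻ b ≻ c
  else if σ = Equiv.swap 1 2 then 2/3 - p₂                                     -- a ≻ c ≻ b
  else if σ = (Equiv.swap 1 2).trans (Equiv.swap 0 1) then p₃ - 1/3            -- b ≻ c ≻ a
  else if σ = Equiv.swap 0 1 then 2/3 - p₃                                     -- b ≻ a ≻ c
  else if σ = (Equiv.swap 0 1).trans (Equiv.swap 1 2) then p₁ - 1/3            -- c ≻ a ≻ b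
  else 2/3 - p₁                                                                -- c ≻ b ≻ a

theorem exists_profile_with_pairwise_margins (p₁ p₂ p₃ : ℝ)
    (h₁ : p₁ ∈ Set.Icc (1/3 : ℝ) (2/3)) (h₂ : p₂ ∈ Set.Icc (1/3 : ℝ) (2/3))
    (h₃ : p₃ ∈ Set.Icc (1/3 : ℝ) (2/3)) :
    ∃ μ : PMF (Equiv.Perm (Fin 3)),
      (∀ σ : Equiv.Perm (Fin 3), (μ σ).toReal = rankingWeight p₁ p₂ p₃ σ) ∧
      (∑ σ : Equiv.Perm (Fin 3),
          (μ σ).toReal * (if σ.symm 0 < σ.symm 1 then 1 else 0)) = p₁ ∧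
      (∑ σ : Equiv.Perm (Fin 3),
          (μ σ).toReal * (if σ.symm 1 < σ.symm 2 then 1 else 0)) = p₂ ∧
      (∑ σ : Equiv.Perm (Fin 3),
          (μ σ).toReal * (if σ.symm 2 < σ.symm 0 then 1 else 0)) = p₃ := by
  obtain ⟨l₁, u₁⟩ := h₁
  obtain ⟨l₂, u₂⟩ := h₂
  obtain ⟨l₃, u₃⟩ := h₃
  have hnn : ∀ σ, 0 ≤ rankingWeight p₁ p₂ p₃ σ := by
    intro σ
    unfold rankingWeight
    split_ifs <;> linarith
  have huniv : (Finset.univ : Finset (Equiv.Perm (Fin 3))) =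
      {Equiv.refl (Fin 3), Equiv.swap 1 2, (Equiv.swap 1 2).trans (Equiv.swap 0 1),
       Equiv.swap 0 1, (Equiv.swap 0 1).trans (Equiv.swap 1 2), Equiv.swap 0 2} := by decide
  have hw0 : rankingWeight p₁ p₂ p₃ (Equiv.refl (Fin 3)) = p₂ - 1/3 := by
    rw [rankingWeight, if_pos rfl]
  have hw1 : rankingWeight p₁ p₂ p₃ (Equiv.swap 1 2) = 2/3 - p₂ := by
    rw [rankingWeight, if_neg (by decide), if_pos rfl]
  have hw2 : rankingWeight p₁ p₂ p₃ ((Equiv.swap 1 2).trans (Equiv.swap 0 1)) = p₃ - 1/3 := by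
    rw [rankingWeight, if_neg (by decide), if_neg (by decide), if_pos rfl]
  have hw3 : rankingWeight p₁ p₂ p₃ (Equiv.swap 0 1) = 2/3 - p₃ := by
    rw [rankingWeight, if_neg (by decide), if_neg (by decide), if_neg (by decide), if_pos rfl]
  have hw4 : rankingWeight p₁ p₂ p₃ ((Equiv.swap 0 1).trans (Equiv.swap 1 2)) = p₁ - 1/3 := by
    rw [rankingWeight, if_neg (by decide), if_neg (by decide), if_neg (by decide),
      if_neg (by decide), if_pos rfl]
  have hw5 : rankingWeight p₁ p₂ p₃ (Equiv.swap 0 2) = 2/3 - p₁ := by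
    rw [rankingWeight, if_neg (by decide), if_neg (by decide), if_neg (by decide),
      if_neg (by decide), if_neg (by decide)]
  have hsumR : ∑ σ : Equiv.Perm (Fin 3), rankingWeight p₁ p₂ p₃ σ = 1 := by
    rw [huniv]
    rw [Finset.sum_insert (by decide), Finset.sum_insert (by decide),
      Finset.sum_insert (by decide), Finset.sum_insert (by decide),
      Finset.sum_insert (by decide), Finset.sum_singleton]
    rw [hw0, hw1, hw2, hw3, hw4, hw5]
    ring
  have hsum : ∑ σ : Equiv.Perm (Fin 3), ENNReal.ofReal (rankingWeight p₁ p₂ p₃ σ) = 1 := by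
    rw [← ENNReal.ofReal_sum_of_nonneg (fun σ _ => hnn σ), hsumR, ENNReal.ofReal_one]
  refine ⟨PMF.ofFintype (fun σ => ENNReal.ofReal (rankingWeight p₁ p₂ p₃ σ)) hsum, ?_, ?_, ?_, ?_⟩
  · intro σ
    simp [PMF.ofFintype_apply, ENNReal.toReal_ofReal (hnn σ)]
  all_goals {
    have key : ∀ σ, (((PMF.ofFintype (fun σ => ENNReal.ofReal (rankingWeight p₁ p₂ p₃ σ)) hsum) σ).toReal)
        = rankingWeight p₁ p₂ p₃ σ := fun σ => by
      simp [PMF.ofFintype_apply, ENNReal.toReal_ofReal (hnn σ)]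
    simp only [key]
    rw [huniv]
    rw [Finset.sum_insert (by decide), Finset.sum_insert (by decide),
      Finset.sum_insert (by decide), Finset.sum_insert (by decide),
      Finset.sum_insert (by decide), Finset.sum_singleton]
    rw [hw0, hw1, hw2, hw3, hw4, hw5]
    norm_num [Equiv.symm_trans_apply, Equiv.swap_apply_def, Fin.ext_iff, Fin.lt_def]
    try ring }
end
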